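/- arXiv:2507.12697 — 2 statements merged into one kernel-verified Lean document; each statement's English description precedes it below -/
import Mathlib

section
/- Let u be a vertex of a simple graph G having exactly two neighbors v and w. Then the edge set of G∧uv − {u,v} equals E(G − {u,v,w}) ∪ { xw : x ∈ (N_G(v) △ N_G(w)) ∖ {v,w} }. -/
open SimpleGraph

universe u v

/-! ### Basic graph operations: flips, local complementation, pivoting, pivot-minors -/

/-- Flip the adjacency of `G` exactly at the pairs of distinct vertices where the
(symmetrized) predicate `p` holds. -/
def sdFlip {V : Type u} (G : SimpleGraph V) (p : V → V → Prop) : SimpleGraph V where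
  Adj x y := x ≠ y ∧ Xor' (G.Adj x y) (p x y ∨ p y x)
  symm := by
    constructor
    intro x y h
    refine ⟨h.1.symm, ?_⟩
    have h2 := h.2
    rwa [G.adj_comm x y, or_comm] at h2
  loopless := by
    constructor
    intro x h
    exact h.1 rfl

/-- Local complementation `G * v`: complement the adjacency inside the neighborhood of `v`. -/
def localComp {V : Type u} (G : SimpleGraph V) (v : V) : SimpleGraph V :=
  sdFlip G (fun x y => G.Adj v x ∧ G.Adj v y)

/-- Pivoting an edge `uv`: `G ∧ uv = G * u * v * u`. -/
def pivot {V : Type u} (G : SimpleGraph V) (u v : V) : SimpleGraph V :=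
  localComp (localComp (localComp G u) v) u

/-- Applying a sequence of pivots. -/
def pivotSeq {V : Type u} (G : SimpleGraph V) : List (V × V) → SimpleGraph V
  | [] => G
  | e :: l => pivotSeq (pivot G e.1 e.2) l

/-- Each pivot in the sequence is performed on an edge of the current graph. -/
def ValidPivots {V : Type u} (G : SimpleGraph V) : List (V × V) → Prop
  | [] => True
  | e :: l => G.Adj e.1 e.2 ∧ ValidPivots (pivot G e.1 e.2) l

/-- `H` is a pivot-minor of `G`: `H` is isomorphic to a graph obtained from `G` by a sequence of
pivotings (on edges of the current graph) and vertex deletions. -/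
def IsPivotMinorOf {W : Type v} {V : Type u} (H : SimpleGraph W) (G : SimpleGraph V) : Prop :=
  ∃ (l : List (V × V)) (S : Set V), ValidPivots G l ∧
    Nonempty (H ≃g (pivotSeq G l).induce S)

/-! ### The half-graph join `G △ H` -/

/-- `G △ H`: the disjoint union of `G` and `H` together with the half graph joining them:
the `i`-th vertex of `G` is adjacent to the `j`-th vertex of `H` iff `i ≥ j`. -/
def halfJoin {n : ℕ} (G H : SimpleGraph (Fin n)) : SimpleGraph (Fin n ⊕ Fin n) where
  Adj x y :=
    match x, y with
    | Sum.inl i, Sum.inl i' => G.Adj i i'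
    | Sum.inr j, Sum.inr j' => H.Adj j j'
    | Sum.inl i, Sum.inr j => j ≤ i
    | Sum.inr j, Sum.inl i => j ≤ i
  symm := by
    constructor
    rintro (i | i) (j | j) h
    · exact G.adj_symm h
    · exact h
    · exact h
    · exact H.adj_symm h
  loopless := by
    constructor
    rintro (i | i) h
    · exact G.irrefl h
    · exact H.irrefl h

/-! ### Flips by a set, by a pair of sets, and by a collection of sets -/

/-- The `X`-flip of `G`: complement the adjacency inside `X`. (The `∅`-flip is `G` itself.) -/
def setFlip {V : Type u} (G : SimpleGraph V) (X : Set V) : SimpleGraph V :=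
  sdFlip G (fun x y => x ∈ X ∧ y ∈ X)

/-- `G * (X, Y)`: complement the adjacency between `X` and `Y`. -/
def pairFlip {V : Type u} (G : SimpleGraph V) (X Y : Set V) : SimpleGraph V :=
  sdFlip G (fun x y => x ∈ X ∧ y ∈ Y)

open Classical in
/-- The member of the collection `P` containing `v`, if any, and `{v}` otherwise. -/
noncomputable def blockOf {V : Type u} (P : Set (Set V)) (v : V) : Set V :=
  if h : ∃ X ∈ P, v ∈ X then h.choose else {v}

/-- A subset `F ⊆ P²` is symmetric if `(X,X') ∈ F` implies `(X',X) ∈ F`. -/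
def SymmRelSet {α : Type u} (F : Set (α × α)) : Prop :=
  ∀ a b : α, (a, b) ∈ F → (b, a) ∈ F

/-- The `(P,F)`-flip `H ⊕ (P,F)` of `H`: distinct vertices `u,v` are adjacent iff
`H.Adj u v` XOR `(P(u), P(v)) ∈ F`. -/
noncomputable def collFlip {V : Type u} (H : SimpleGraph V) (P : Set (Set V))
    (F : Set (Set V × Set V)) : SimpleGraph V :=
  sdFlip H (fun x y => (blockOf P x, blockOf P y) ∈ F)

/-- `P` is a collection of pairwise disjoint non-empty subsets. -/
def IsDisjNonemptyColl {V : Type u} (P : Set (Set V)) : Prop :=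
  (∀ X ∈ P, X.Nonempty) ∧ P.PairwiseDisjoint id

/-- `Q` is a coarsening of `P`: a collection of disjoint non-empty sets,
each a union of members of `P`. -/
def IsCoarsening {α : Type u} (Q P : Set (Set α)) : Prop :=
  IsDisjNonemptyColl Q ∧ ∀ X ∈ Q, ∃ C ⊆ P, X = ⋃₀ C

/-! ### The graph `mPₙ` and flipped `mPₙ`'s -/

/-- `mPₙ`: the disjoint union of `m` copies of the path `Pₙ`, with vertex set `[m] × [n]`. -/
def pathsGraph (m n : ℕ) : SimpleGraph (Fin m × Fin n) where
  Adj x y := x.1 = y.1 ∧ (pathGraph n).Adj x.2 y.2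
  symm := by
    constructor
    rintro ⟨i, a⟩ ⟨j, b⟩ ⟨h1, h2⟩
    exact ⟨h1.symm, (pathGraph n).adj_symm h2⟩
  loopless := by
    constructor
    rintro ⟨i, a⟩ ⟨_, h⟩
    exact (pathGraph n).irrefl h

/-- The `j`-th column of `mPₙ`. -/
def column (m n : ℕ) (j : Fin n) : Set (Fin m × Fin n) := {p | p.2 = j}

/-- The column set of `mPₙ`. -/
def columnSet (m n : ℕ) : Set (Set (Fin m × Fin n)) := Set.range (column m n)

/-- A flipped `mPₙ`: a `P`-flip of `mPₙ` where `P` is a coarsening of the column set. -/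
def IsFlippedPaths (m n : ℕ) (G : SimpleGraph (Fin m × Fin n)) : Prop :=
  ∃ (P : Set (Set (Fin m × Fin n))) (F : Set (Set (Fin m × Fin n) × Set (Fin m × Fin n))),
    IsCoarsening P (columnSet m n) ∧ F ⊆ P ×ˢ P ∧ SymmRelSet F ∧
    G = collFlip (pathsGraph m n) P F

/-- A `k`-flipped `mPₙ`: a flipped `mPₙ` with `|P| ≤ k`. -/
def IsKFlippedPaths (k m n : ℕ) (G : SimpleGraph (Fin m × Fin n)) : Prop :=
  ∃ (P : Set (Set (Fin m × Fin n))) (F : Set (Set (Fin m × Fin n) × Set (Fin m × Fin n))),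
    IsCoarsening P (columnSet m n) ∧ P.ncard ≤ k ∧ F ⊆ P ×ˢ P ∧ SymmRelSet F ∧
    G = collFlip (pathsGraph m n) P F

/-! ### Cut-rank and rank-depth -/

open Classical in
/-- The cut-rank `ρ_G(S)`: the rank over GF(2) of the `S × (V ∖ S)` submatrix of the
adjacency matrix of `G`. -/
noncomputable def cutRank {V : Type u} [Fintype V] (G : SimpleGraph V) (S : Set V) : ℕ :=
  Matrix.rank (Matrix.of fun (i : S) (j : (Sᶜ : Set V)) =>
    if G.Adj (i : V) (j : V) then (1 : ZMod 2) else 0)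

/-- The rank-depth of `G`: the least `k` such that `G` has a decomposition `(T, σ)` into a
tree `T` with the vertices of `G` identified with the leaves of `T` via `σ`, of width at
most `k` and radius at most `k`.  The width condition is expressed as: for every non-leaf
node `v` of `T` and every set `S ⊆ V(G)` that is a union of parts of the partition of `V(G)`
induced by the components of `T - v`, we have `ρ_G(S) ≤ k`. -/
noncomputable def rankDepth {V : Type u} [Fintype V] (G : SimpleGraph V) : ℕ :=
  sInf {k : ℕ |
    ∃ (N : ℕ) (T : SimpleGraph (Fin N))
      (σ : V ≃ {x : Fin N // (T.neighborSet x).ncard ≤ 1}),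
      T.IsTree ∧
      (∃ c : Fin N, ∀ x : Fin N, T.dist c x ≤ k) ∧
      (∀ x : Fin N, 1 < (T.neighborSet x).ncard →
        ∀ S : Set V,
          (∀ a b : V, a ∈ S →
            (∃ w : T.Walk ((σ a : {x : Fin N // (T.neighborSet x).ncard ≤ 1}) : Fin N)
                ((σ b : {x : Fin N // (T.neighborSet x).ncard ≤ 1}) : Fin N),
              x ∉ w.support) → b ∈ S) →
          cutRank G S ≤ k)}

/-! ### Restrictions of collections, and the sets `C_F`, `L_F`, `R_F`, `D_F` -/

/-- The restriction `P|_{S}` of a collection of subsets of `V` to a subset `S`. -/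
def restrictColl {V : Type u} (P : Set (Set V)) (S : Set V) : Set (Set S) :=
  {Y | ∃ X ∈ P, (Subtype.val ⁻¹' X : Set S).Nonempty ∧ Y = (Subtype.val ⁻¹' X : Set S)}

/-- The restriction `F|_{S}` of a collection of pairs of subsets of `V` to a subset `S`. -/
def restrictF {V : Type u} (F : Set (Set V × Set V)) (S : Set V) : Set (Set S × Set S) :=
  {q | ∃ p ∈ F, (Subtype.val ⁻¹' p.1 : Set S).Nonempty ∧ (Subtype.val ⁻¹' p.2 : Set S).Nonempty ∧
      q = ((Subtype.val ⁻¹' p.1 : Set S), (Subtype.val ⁻¹' p.2 : Set S))}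

/-- `C_F(X,X') = {Y ∈ P : (X,Y) ∈ F and (X',Y) ∈ F}`. -/
def CF {V : Type u} (P : Set (Set V)) (F : Set (Set V × Set V)) (X X' : Set V) : Set (Set V) :=
  {Y ∈ P | (X, Y) ∈ F ∧ (X', Y) ∈ F}

/-- `L_F(X,X') = {Y ∈ P : (X,Y) ∈ F and (X',Y) ∉ F}`. -/
def LF {V : Type u} (P : Set (Set V)) (F : Set (Set V × Set V)) (X X' : Set V) : Set (Set V) :=
  {Y ∈ P | (X, Y) ∈ F ∧ (X', Y) ∉ F}

/-- `R_F(X,X') = {Y ∈ P : (X,Y) ∉ F and (X',Y) ∈ F}`. -/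
def RF {V : Type u} (P : Set (Set V)) (F : Set (Set V × Set V)) (X X' : Set V) : Set (Set V) :=
  {Y ∈ P | (X, Y) ∉ F ∧ (X', Y) ∈ F}

/-- `D_F(X,X') = (C×L) ∪ (C×R) ∪ (L×R) ∪ (L×C) ∪ (R×C) ∪ (R×L)`. -/
def DF {V : Type u} (P : Set (Set V)) (F : Set (Set V × Set V)) (X X' : Set V) :
    Set (Set V × Set V) :=
  (CF P F X X' ×ˢ LF P F X X') ∪ (CF P F X X' ×ˢ RF P F X X') ∪ (LF P F X X' ×ˢ RF P F X X') ∪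
  (LF P F X X' ×ˢ CF P F X X') ∪ (RF P F X X' ×ˢ CF P F X X') ∪ (RF P F X X' ×ˢ LF P F X X')

/-- The set of `t` consecutive vertices of the path `P_s` starting at position `i` (0-indexed). -/
def consec (s i t : ℕ) : Set (Fin s) := {x | i ≤ (x : ℕ) ∧ (x : ℕ) < i + t}

/-- An `(s,t)`-path: a graph isomorphic to the `X`-flip of `P_s` for a set `X` of `t`
consecutive vertices of `P_s`. -/
def IsSTPath (s t : ℕ) {W : Type v} (G : SimpleGraph W) : Prop :=
  ∃ i : ℕ, i + t ≤ s ∧ Nonempty (G ≃g setFlip (pathGraph s) (consec s i t))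

/-! Off `{u, v}`, pivoting an edge `uv` complements the adjacency of `x` and `y` exactly when
`x ∈ N(u), y ∈ N(v)` xor `x ∈ N(v), y ∈ N(u)`. If `N(u) = {v, w}`, membership in `N(u)` means
being `w`, so nothing changes away from `w`, and the neighbourhood of `w` becomes
`N(v) △ N(w)`. -/

namespace SimpleGraph

variable {V : Type u} (G : SimpleGraph V)

theorem localComp_adj (c a b : V) :
    (localComp G c).Adj a b ↔ a ≠ b ∧ Xor (G.Adj a b) (G.Adj c a ∧ G.Adj c b) := by
  show a ≠ b ∧ Xor (G.Adj a b) ((G.Adj c a ∧ G.Adj c b) ∨ (G.Adj c b ∧ G.Adj c a)) ↔ _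
  rw [and_comm (a := G.Adj c b), or_self]

theorem localComp_adj_center (c z : V) : (localComp G c).Adj c z ↔ G.Adj c z := by
  have : G.Adj c z → c ≠ z := G.ne_of_adj
  grind [localComp_adj, G.irrefl]

/-- That is, the adjacency of `x` and `y` is complemented exactly when they lie in two
different classes among `N(u) ∖ N(v)`, `N(v) ∖ N(u)` and `N(u) ∩ N(v)`. -/
theorem pivot_adj {u v x y : V} (huv : G.Adj u v) (hxu : x ≠ u) (hxv : x ≠ v) (hyu : y ≠ u)
    (hyv : y ≠ v) :
    (pivot G u v).Adj x y ↔
      x ≠ y ∧ Xor (G.Adj x y) (Xor (G.Adj u x ∧ G.Adj v y) (G.Adj v x ∧ G.Adj u y)) := by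
  have adj_v₁ : ∀ z, z ≠ v → ((localComp G u).Adj v z ↔ Xor (G.Adj v z) (G.Adj u z)) := by
    intro z hzv
    simp [localComp_adj, huv, hzv.symm]
  have adj_u₂ : ∀ z, z ≠ u → z ≠ v → ((localComp (localComp G u) v).Adj u z ↔ G.Adj v z) := by
    intro z hzu hzv
    have hvu : (localComp G u).Adj v u := (localComp_adj_center G u v).2 huv |>.symm
    rw [localComp_adj, localComp_adj_center, adj_v₁ z hzv]
    grind
  rw [pivot, localComp_adj, adj_u₂ x hxu hxv, adj_u₂ y hyu hyv, localComp_adj, adj_v₁ x hxv,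
    adj_v₁ y hyv, localComp_adj]
  -- over GF(2): `ac + (a + b)(c + d) + bd = ad + bc`
  grind

end SimpleGraph

theorem stmt2_general {V : Type} (G : SimpleGraph V) (u v w : V)
    (hN : G.neighborSet u = {v, w}) :
    ∀ x y : V, x ∉ ({u, v} : Set V) → y ∉ ({u, v} : Set V) →
      ((pivot G u v).Adj x y ↔
        ((G.Adj x y ∧ x ≠ w ∧ y ≠ w) ∨
          (x = w ∧ y ∈ (symmDiff (G.neighborSet v) (G.neighborSet w)) \ {v, w}) ∨
          (y = w ∧ x ∈ (symmDiff (G.neighborSet v) (G.neighborSet w)) \ {v, w}))) := by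
  have hu : ∀ z, G.Adj u z ↔ z = v ∨ z = w := fun z => by
    rw [← mem_neighborSet, hN, Set.mem_insert_iff, Set.mem_singleton_iff]
  intro x y hx hy
  simp only [Set.mem_insert_iff, Set.mem_singleton_iff, not_or] at hx hy
  rw [G.pivot_adj ((hu v).2 (Or.inl rfl)) hx.1 hx.2 hy.1 hy.2, hu, hu]
  simp only [Set.mem_sdiff, Set.mem_symmDiff, mem_neighborSet, Set.mem_insert_iff,
    Set.mem_singleton_iff, hx.2, hy.2, false_or]
  have hsymm : G.Adj w x ↔ G.Adj x w := G.adj_comm w x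
  have hne : G.Adj x y → x ≠ y := G.ne_of_adj
  grind

theorem stmt2 {V : Type} (G : SimpleGraph V) (u v w : V) (hvw : v ≠ w)
    (hN : G.neighborSet u = {v, w}) :
    ∀ x y : V, x ∉ ({u, v} : Set V) → y ∉ ({u, v} : Set V) →
      ((pivot G u v).Adj x y ↔
        ((G.Adj x y ∧ x ≠ w ∧ y ≠ w) ∨
          (x = w ∧ y ∈ (symmDiff (G.neighborSet v) (G.neighborSet w)) \ {v, w}) ∨
          (y = w ∧ x ∈ (symmDiff (G.neighborSet v) (G.neighborSet w)) \ {v, w}))) :=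
  stmt2_general G u v w hN
end

section
/- Let H be a graph, P a collection of pairwise disjoint non-empty subsets of V(H), and F a symmetric subset of P². Suppose the (P,F)-flip G of H has an edge uv with u ∈ X, v ∈ X' for distinct X, X' ∈ P. Then for every subgraph H' of H whose vertex set is disjoint from N_H[{u,v}], the induced subgraph of G∧uv on V(H') equals H'⊕(P|_{H'}, (F △ D_F(X,X'))|_{H'}). -/
open SimpleGraph

universe u v

/-
A vertex `z` outside `N_H[u] ∪ N_H[x]` is adjacent in `G = H ⊕ (P, F)` to `u` iff
`(X, P(z)) ∈ F`, and to `x` iff `(X', P(z)) ∈ F`. Pivoting `ux` toggles the adjacency of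
`a, b ∉ {u, x}` iff `(ua ∧ xb) ⊻ (xa ∧ ub)`, which for such `a, b` says exactly
`(P(a), P(b)) ∈ D_F(X, X')`. Flipping commutes with taking induced subgraphs, so both sides agree.
-/

@[simp] lemma sdFlip_adj {V : Type*} (G : SimpleGraph V) (p : V → V → Prop) (a b : V) :
    (sdFlip G p).Adj a b ↔ a ≠ b ∧ Xor (G.Adj a b) (p a b ∨ p b a) := Iff.rfl

lemma xor_assoc_iff (p q r : Prop) : Xor (Xor p q) r ↔ Xor p (Xor q r) := by
  unfold Xor
  tauto

lemma pivot_adj {V : Type*} {G : SimpleGraph V} {u x a b : V} (hux : G.Adj u x)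
    (hau : a ≠ u) (hax : a ≠ x) (hbu : b ≠ u) (hbx : b ≠ x) :
    (pivot G u x).Adj a b ↔
      Xor (G.Adj a b) (Xor (G.Adj u a ∧ G.Adj x b) (G.Adj x a ∧ G.Adj u b)) := by
  by_cases hab : a = b
  · subst hab
    simp [Xor, and_comm]
  -- The three local complementations toggle `ab` by `ua·ub + (ua+xa)(ub+xb) + xa·xb` over GF(2).
  simp only [pivot, localComp, sdFlip_adj, hux, hux.symm, hab,
    hau.symm, hax.symm, hbu.symm, hbx.symm, hux.ne.symm, ne_eq, not_false_eq_true, true_and]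
  by_cases h1 : G.Adj u a <;> by_cases h2 : G.Adj u b <;> by_cases h3 : G.Adj x a <;>
    by_cases h4 : G.Adj x b <;> by_cases h5 : G.Adj a b <;> simp [h1, h2, h3, h4, h5, Xor]

lemma mem_blockOf_self {V : Type*} (P : Set (Set V)) (v : V) : v ∈ blockOf P v := by
  unfold blockOf
  split
  · next h => exact h.choose_spec.2
  · rfl

lemma blockOf_eq {V : Type*} {P : Set (Set V)} (hP : P.PairwiseDisjoint id)
    {X : Set V} (hX : X ∈ P) {v : V} (hv : v ∈ X) : blockOf P v = X := by
  unfold blockOf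
  split
  · next h =>
    by_contra hne
    exact Set.disjoint_left.mp (hP h.choose_spec.1 hX hne) h.choose_spec.2 hv
  · next h => exact absurd ⟨X, hX, hv⟩ h

lemma collFlip_adj {V : Type*} {H : SimpleGraph V} {P : Set (Set V)}
    {F : Set (Set V × Set V)} (hF : SymmRelSet F) (a b : V) :
    (collFlip H P F).Adj a b ↔ a ≠ b ∧ Xor (H.Adj a b) ((blockOf P a, blockOf P b) ∈ F) := by
  simp only [collFlip, sdFlip_adj, or_iff_left_of_imp (hF _ _)]

lemma collFlip_adj_of_not_adj {V : Type*} {H : SimpleGraph V} {P : Set (Set V)}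
    {F : Set (Set V × Set V)} (hF : SymmRelSet F) {a b : V} (hne : a ≠ b) (hab : ¬H.Adj a b) :
    (collFlip H P F).Adj a b ↔ (blockOf P a, blockOf P b) ∈ F := by
  simp [collFlip_adj hF, hne, hab, Xor]

lemma SymmRelSet.symmDiff {α : Type*} {F F' : Set (α × α)} (hF : SymmRelSet F)
    (hF' : SymmRelSet F') : SymmRelSet (symmDiff F F') := by
  rintro a b (⟨h, h'⟩ | ⟨h, h'⟩)
  · exact Or.inl ⟨hF _ _ h, fun hc => h' (hF' _ _ hc)⟩
  · exact Or.inr ⟨hF' _ _ h, fun hc => h' (hF _ _ hc)⟩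

lemma symmRelSet_DF {V : Type*} (P : Set (Set V)) (F : Set (Set V × Set V)) (X X' : Set V) :
    SymmRelSet (DF P F X X') := by
  intro A B h
  simp only [DF, Set.mem_union, Set.mem_prod] at h ⊢
  tauto

lemma DF_subset_prod {V : Type*} (P : Set (Set V)) (F : Set (Set V × Set V)) (X X' : Set V) :
    DF P F X X' ⊆ P ×ˢ P := by
  rintro ⟨A, B⟩ h
  simp only [DF, CF, LF, RF, Set.mem_union, Set.mem_prod, Set.mem_sep_iff] at h ⊢
  tauto

lemma mem_DF_iff {V : Type*} {P : Set (Set V)} {F : Set (Set V × Set V)} (hFP : F ⊆ P ×ˢ P)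
    (X X' A B : Set V) :
    (A, B) ∈ DF P F X X' ↔ Xor ((X, A) ∈ F ∧ (X', B) ∈ F) ((X', A) ∈ F ∧ (X, B) ∈ F) := by
  have hA : (X, A) ∈ F ∨ (X', A) ∈ F → A ∈ P := by rintro (h | h) <;> exact (hFP h).2
  have hB : (X, B) ∈ F ∨ (X', B) ∈ F → B ∈ P := by rintro (h | h) <;> exact (hFP h).2
  simp only [DF, CF, LF, RF, Set.mem_union, Set.mem_prod, Set.mem_sep_iff, Xor]
  by_cases h1 : (X, A) ∈ F <;> by_cases h2 : (X', A) ∈ F <;>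
    by_cases h3 : (X, B) ∈ F <;> by_cases h4 : (X', B) ∈ F <;> simp_all

lemma Set.PairwiseDisjoint.restrictColl {V : Type*} {P : Set (Set V)} (hP : P.PairwiseDisjoint id)
    (S : Set V) : (restrictColl P S).PairwiseDisjoint id := by
  rintro _ ⟨Y, hY, -, rfl⟩ _ ⟨Y', hY', -, rfl⟩ hne
  exact (hP hY hY' fun h => hne (h ▸ rfl)).preimage _

lemma blockOf_restrictColl {V : Type*} {P : Set (Set V)} (hP : P.PairwiseDisjoint id)
    {S : Set V} {a : S} {Y : Set V} (hY : Y ∈ P) (ha : (a : V) ∈ Y) :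
    blockOf (restrictColl P S) a = (Subtype.val ⁻¹' Y : Set S) :=
  blockOf_eq (hP.restrictColl S) ⟨Y, hY, ⟨a, ha⟩, rfl⟩ ha

lemma blockOf_pair_mem_restrictF_iff {V : Type*} {P : Set (Set V)} (hP : P.PairwiseDisjoint id)
    {F : Set (Set V × Set V)} (hFP : F ⊆ P ×ˢ P) {S : Set V} (a b : S) :
    (blockOf (restrictColl P S) a, blockOf (restrictColl P S) b) ∈ restrictF F S ↔
      (blockOf P a, blockOf P b) ∈ F := by
  constructor
  · rintro ⟨⟨Y, Y'⟩, hYY', -, -, heq⟩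
    obtain ⟨hY, hY'⟩ := hFP hYY'
    obtain ⟨ha, hb⟩ := Prod.mk.inj heq
    have haY : (a : V) ∈ Y := by simpa [ha] using mem_blockOf_self (restrictColl P S) a
    have hbY' : (b : V) ∈ Y' := by simpa [hb] using mem_blockOf_self (restrictColl P S) b
    rwa [blockOf_eq hP hY haY, blockOf_eq hP hY' hbY']
  · intro h
    obtain ⟨hA, hB⟩ := hFP h
    refine ⟨_, h, ⟨a, mem_blockOf_self P a⟩, ⟨b, mem_blockOf_self P b⟩, ?_⟩
    rw [blockOf_restrictColl hP hA (mem_blockOf_self P a),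
      blockOf_restrictColl hP hB (mem_blockOf_self P b)]

lemma collFlip_induce {V : Type*} (H : SimpleGraph V) {P : Set (Set V)}
    (hP : P.PairwiseDisjoint id) {F : Set (Set V × Set V)} (hFP : F ⊆ P ×ˢ P) (S : Set V) :
    collFlip (H.induce S) (restrictColl P S) (restrictF F S) = (collFlip H P F).induce S := by
  ext a b
  simp only [collFlip, sdFlip_adj, comap_adj, Function.Embedding.coe_subtype,
    blockOf_pair_mem_restrictF_iff hP hFP, ne_eq, Subtype.ext_iff]

theorem stmt8_general {V : Type} (H : SimpleGraph V) (P : Set (Set V))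
    (hP : IsDisjNonemptyColl P)
    (F : Set (Set V × Set V)) (hFP : F ⊆ P ×ˢ P) (hFsymm : SymmRelSet F)
    (u x : V) (X X' : Set V) (hX : X ∈ P) (hX' : X' ∈ P)
    (hu : u ∈ X) (hx : x ∈ X')
    (hadj : (collFlip H P F).Adj u x)
    (S : Set V)
    (hdisj : ∀ z ∈ S, z ∉ insert u (H.neighborSet u) ∪ insert x (H.neighborSet x)) :
    (pivot (collFlip H P F) u x).induce S =
      collFlip (H.induce S) (restrictColl P S) (restrictF (symmDiff F (DF P F X X')) S) := by
  have hFD : SymmRelSet (symmDiff F (DF P F X X')) := hFsymm.symmDiff (symmRelSet_DF P F X X')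
  rw [collFlip_induce H hP.2 (Set.symmDiff_subset_union.trans
    (Set.union_subset hFP (DF_subset_prod P F X X')))]
  have far : ∀ z ∈ S, z ≠ u ∧ z ≠ x ∧ ¬H.Adj u z ∧ ¬H.Adj x z := by
    intro z hz
    have h := hdisj z hz
    simp only [Set.mem_union, Set.mem_insert_iff, mem_neighborSet, not_or] at h
    exact ⟨h.1.1, h.2.1, h.1.2, h.2.2⟩
  have adj_u : ∀ z ∈ S, (collFlip H P F).Adj u z ↔ (X, blockOf P z) ∈ F := fun z hz => by
    rw [collFlip_adj_of_not_adj hFsymm (far z hz).1.symm (far z hz).2.2.1, blockOf_eq hP.2 hX hu]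
  have adj_x : ∀ z ∈ S, (collFlip H P F).Adj x z ↔ (X', blockOf P z) ∈ F := fun z hz => by
    rw [collFlip_adj_of_not_adj hFsymm (far z hz).2.1.symm (far z hz).2.2.2, blockOf_eq hP.2 hX' hx]
  ext ⟨a, ha⟩ ⟨b, hb⟩
  simp only [comap_adj, Function.Embedding.coe_subtype]
  rw [pivot_adj hadj (far a ha).1 (far a ha).2.1 (far b hb).1 (far b hb).2.1, adj_u a ha,
    adj_u b hb, adj_x a ha, adj_x b hb, collFlip_adj hFsymm, collFlip_adj hFD, Set.mem_symmDiff,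
    mem_DF_iff hFP]
  rcases eq_or_ne a b with rfl | hab
  · simp [Xor, and_comm]
  simp only [hab, ne_eq, not_false_eq_true, true_and]
  exact xor_assoc_iff _ _ _

theorem stmt8 {V : Type} (H : SimpleGraph V) (P : Set (Set V))
    (hP : IsDisjNonemptyColl P)
    (F : Set (Set V × Set V)) (hFP : F ⊆ P ×ˢ P) (hFsymm : SymmRelSet F)
    (u x : V) (X X' : Set V) (hX : X ∈ P) (hX' : X' ∈ P) (hXX' : X ≠ X')
    (hu : u ∈ X) (hx : x ∈ X')
    (hadj : (collFlip H P F).Adj u x)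
    (S : Set V)
    (hdisj : ∀ z ∈ S, z ∉ insert u (H.neighborSet u) ∪ insert x (H.neighborSet x)) :
    (pivot (collFlip H P F) u x).induce S =
      collFlip (H.induce S) (restrictColl P S) (restrictF (symmDiff F (DF P F X X')) S) :=
  stmt8_general H P hP F hFP hFsymm u x X X' hX hX' hu hx hadj S hdisj
end
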